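/- Let l, m be natural numbers with m ≤ l and m ≡ 2 (mod 4). If H_l^m(−2) ≡ 0 (mod 8), then l ≡ 5 (mod 8). -/

import Mathlib

/-- The coefficient `σ_l^m(k)` of the Holt–Ille polynomial `H_l^m`. -/
def sigmaLM (l m k : ℕ) : ℚ :=
  if (l + m) % 2 = 0 then
    (-2 : ℚ) ^ k * (((l - m) / 2).choose k : ℚ) * (((l + m) / 2).choose k : ℚ) /
      (((2 * k).choose k : ℚ))
  else
    (-2 : ℚ) ^ k * (((l - m) / 2).choose k : ℚ) * (((l + m) / 2).choose k : ℚ) /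
      ((((2 * k).choose k : ℚ)) * (2 * (k : ℚ) + 1))

/-- The value `H_l^m(−2) = Σ_{k=0}^{⌊(l−m)/2⌋} σ_l^m(k)`. -/
def HLM (l m : ℕ) : ℚ := ∑ k ∈ Finset.range ((l - m) / 2 + 1), sigmaLM l m k

/-- `a ≡ b (mod 2^N)` for rationals (with odd denominators), expressed via the 2-adic
norm on `ℚ₂`: it means `‖a − b‖₂ ≤ 2^(−N)`. -/
def Cong2 (a b : ℚ) (N : ℕ) : Prop :=
  ‖((a - b : ℚ) : ℚ_[2])‖ ≤ (2 : ℝ) ^ (-(N : ℤ))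

/-!
Write `a = ⌊(l−m)/2⌋` and `b = ⌊(l+m)/2⌋`, so that `b ≡ a + 2 (mod 4)`. Since
`v₂ C(2k, k) ≤ k − 3` for `k ≥ 4`, every `σ_l^m(k)` with `k ≥ 4` is `≡ 0 (mod 8)`, hence
`H_l^m(−2) ≡ σ(0) + σ(1) + σ(2) + σ(3) (mod 8)`. Multiplying by the odd number `15` (for `l`
even) or `105` (for `l` odd) turns this head into the integer `∑_{k ≤ 3} c_k C(a, k) C(b, k)`,
whose residue mod 8 only depends on `a, b mod 16`. A finite check shows that it never vanishes
mod 8 for `l` even, and that for `l` odd it vanishes only if `a + b = l − 1 ≡ 4 (mod 8)`.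
-/

open Finset

theorem Nat.choose_add_modEq_of_dvd {d N k : ℕ} (hd : ∀ i ∈ Ioc 0 k, d ∣ N.choose i) (n : ℕ) :
    (n + N).choose k ≡ n.choose k [MOD d] := by
  rw [Nat.add_choose_eq,
    Nat.sum_antidiagonal_eq_sum_range_succ (fun i j ↦ n.choose i * N.choose j), sum_range_succ,
    Nat.sub_self, Nat.choose_zero_right, mul_one]
  have hdvd : d ∣ ∑ i ∈ range k, n.choose i * N.choose (k - i) :=
    dvd_sum fun i hi ↦ dvd_mul_of_dvd_right (hd _ (by simp at hi ⊢; omega)) _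
  simpa using (Nat.modEq_zero_iff_dvd.2 hdvd).add_right (n.choose k)

theorem Nat.choose_modEq_choose_mod_of_dvd {d N k : ℕ} (hd : ∀ i ∈ Ioc 0 k, d ∣ N.choose i)
    (n : ℕ) : n.choose k ≡ (n % N).choose k [MOD d] := by
  suffices ∀ q r, (r + N * q).choose k ≡ r.choose k [MOD d] by
    simpa [Nat.mod_add_div] using this (n / N) (n % N)
  intro q r
  induction q with
  | zero => rfl
  | succ q ih => rw [Nat.mul_succ, ← add_assoc]; exact (choose_add_modEq_of_dvd hd _).trans ih

theorem padicValNat_two_choose_two_mul_add_three_le {k : ℕ} (hk : 4 ≤ k) :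
    padicValNat 2 ((2 * k).choose k) + 3 ≤ k := by
  -- the bound `v₂ ≤ log₂ (2k)` used for `k ≥ 6` is too weak for `k = 4, 5`
  by_cases hk6 : k < 6
  · have hndvd : ¬ 2 ^ (k - 2) ∣ (2 * k).choose k := by interval_cases k <;> decide
    have := (padicValNat_dvd_iff_le (Nat.choose_pos (by omega)).ne').not.mp hndvd
    omega
  · obtain ⟨j, rfl⟩ : ∃ j, k = j + 6 := ⟨k - 6, by omega⟩
    have hlog : Nat.log 2 (2 * (j + 6)) < j + 4 := by
      refine Nat.log_lt_of_lt_pow (by omega) ?_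
      have := Nat.lt_two_pow_self (n := j)
      rw [pow_add]
      omega
    have := Nat.factorization_def ((2 * (j + 6)).choose (j + 6)) Nat.prime_two ▸
      Nat.factorization_choose_le_log
    omega

theorem padicNorm_two_sigmaLM_le (l m k : ℕ) :
    padicNorm 2 (sigmaLM l m k) ≤ 2 ^ ((padicValNat 2 ((2 * k).choose k) : ℤ) - k) := by
  set v := padicValNat 2 ((2 * k).choose k)
  have hC : padicNorm 2 ((2 * k).choose k : ℚ) = 2 ^ (-(v : ℤ)) := by
    rw [padicNorm.eq_zpow_of_nonzero (by exact_mod_cast (Nat.choose_pos (by omega)).ne'),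
      padicValRat.of_nat]
    norm_cast
  have hodd : padicNorm 2 (2 * k + 1 : ℚ) = 1 := by
    exact_mod_cast (padicNorm.nat_eq_one_iff (2 * k + 1)).2 (by omega)
  have htwo : padicNorm 2 (2 : ℚ) = 1 / 2 := by
    simpa using padicNorm.padicNorm_p (p := 2) one_lt_two
  have hσ : padicNorm 2 (sigmaLM l m k) = (1 / 2) ^ k * padicNorm 2 (((l - m) / 2).choose k)
      * padicNorm 2 (((l + m) / 2).choose k) / 2 ^ (-(v : ℤ)) := by
    unfold sigmaLM
    split_ifs <;> simp only [padicNorm.div, padicNorm.mul, IsAbsoluteValue.abv_pow (padicNorm 2),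
      padicNorm.neg, hodd, htwo, hC, mul_one]
  calc padicNorm 2 (sigmaLM l m k) ≤ (1 / 2) ^ k * 1 * 1 / 2 ^ (-(v : ℤ)) := by
        rw [hσ]; gcongr
        exacts [padicNorm.nonneg _, padicNorm.of_nat _, padicNorm.of_nat _]
    _ = 2 ^ ((v : ℤ) - k) := by
        rw [zpow_sub₀ two_ne_zero, zpow_neg, zpow_natCast, zpow_natCast, one_div, inv_pow]
        field_simp

theorem padicNorm_two_sigmaLM_le_of_four_le (l m : ℕ) {k : ℕ} (hk : 4 ≤ k) :
    padicNorm 2 (sigmaLM l m k) ≤ 2 ^ (-3 : ℤ) :=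
  (padicNorm_two_sigmaLM_le l m k).trans <| zpow_le_zpow_right₀ one_le_two <| by
    have := padicValNat_two_choose_two_mul_add_three_le hk
    omega

theorem sigmaLM_eq_zero_of_lt {l m k : ℕ} (hk : (l - m) / 2 < k) : sigmaLM l m k = 0 := by
  simp [sigmaLM, Nat.choose_eq_zero_of_lt hk]

theorem HLM_eq_sum_range_four_add (l m : ℕ) :
    HLM l m =
      ∑ k ∈ range 4, sigmaLM l m k + ∑ k ∈ range ((l - m) / 2 + 1), sigmaLM l m (4 + k) := by
  rw [← sum_range_add, HLM]
  exact sum_subset (range_subset_range.2 (by omega)) fun k _ hk ↦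
    sigmaLM_eq_zero_of_lt (by simpa using hk)

theorem padicNorm_two_HLM_sub_sum_range_four_le (l m : ℕ) :
    padicNorm 2 (HLM l m - ∑ k ∈ range 4, sigmaLM l m k) ≤ 2 ^ (-3 : ℤ) := by
  rw [HLM_eq_sum_range_four_add, add_sub_cancel_left]
  exact padicNorm.sum_le' (fun k _ ↦ padicNorm_two_sigmaLM_le_of_four_le l m (by omega))
    (by positivity)

theorem cong2_iff_padicNorm_le (a b : ℚ) (N : ℕ) :
    Cong2 a b N ↔ padicNorm 2 (a - b) ≤ 2 ^ (-(N : ℤ)) := by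
  rw [Cong2, Padic.eq_padicNorm, ← Rat.cast_le (K := ℝ)]
  push_cast
  rfl

theorem padicNorm_two_sum_range_four_sigmaLM_le {l m : ℕ} (h : Cong2 (HLM l m) 0 3) :
    padicNorm 2 (∑ k ∈ range 4, sigmaLM l m k) ≤ 2 ^ (-3 : ℤ) := by
  rw [cong2_iff_padicNorm_le, sub_zero] at h
  calc padicNorm 2 (∑ k ∈ range 4, sigmaLM l m k)
      = padicNorm 2 (HLM l m - (HLM l m - ∑ k ∈ range 4, sigmaLM l m k)) := by rw [sub_sub_cancel]
    _ ≤ 2 ^ (-3 : ℤ) := padicNorm.sub.trans (max_le h (padicNorm_two_HLM_sub_sum_range_four_le l m))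

theorem pow_dvd_of_padicNorm_le_of_intCast_mul_eq {p e : ℕ} [Fact p.Prime] {c n : ℤ} {x : ℚ}
    (hx : padicNorm p x ≤ (p : ℚ) ^ (-(e : ℤ))) (h : c * x = n) : ((p ^ e : ℕ) : ℤ) ∣ n := by
  rw [padicNorm.dvd_iff_norm_le, ← h, padicNorm.mul]
  exact (mul_le_of_le_one_left (padicNorm.nonneg _) (padicNorm.of_int c)).trans hx

def binomPairSum (c : Fin 4 → ℤ) (a b : ℕ) : ℤ := ∑ k : Fin 4, c k * a.choose k * b.choose k

theorem sum_range_four_sigmaLM_of_even {l m : ℕ} (h : (l + m) % 2 = 0) :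
    (15 : ℤ) * ∑ k ∈ range 4, sigmaLM l m k =
      binomPairSum ![15, -15, 10, -6] ((l - m) / 2) ((l + m) / 2) := by
  simp only [sum_range_succ, sum_range_zero, sigmaLM, h, binomPairSum, Fin.sum_univ_four,
    reduceIte]
  generalize (l - m) / 2 = a
  generalize (l + m) / 2 = b
  simp [Nat.choose]
  ring

theorem sum_range_four_sigmaLM_of_odd {l m : ℕ} (h : (l + m) % 2 ≠ 0) :
    (105 : ℤ) * ∑ k ∈ range 4, sigmaLM l m k =
      binomPairSum ![105, -35, 14, -6] ((l - m) / 2) ((l + m) / 2) := by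
  simp only [sum_range_succ, sum_range_zero, sigmaLM, h, binomPairSum, Fin.sum_univ_four,
    reduceIte]
  generalize (l - m) / 2 = a
  generalize (l + m) / 2 = b
  simp [Nat.choose]
  ring

theorem binomPairSum_modEq_mod_sixteen (c : Fin 4 → ℤ) (a b : ℕ) :
    binomPairSum c a b ≡ binomPairSum c (a % 16) (b % 16) [ZMOD 8] := by
  have hchoose (n : ℕ) (k : Fin 4) : (n.choose k : ℤ) ≡ (n % 16).choose k [ZMOD 8] := by
    refine Int.natCast_modEq_iff.2 (Nat.choose_modEq_choose_mod_of_dvd (fun i hi ↦ ?_) n)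
    have : i ∈ Ioc 0 3 := Ioc_subset_Ioc_right (Nat.le_of_lt_succ k.2) hi
    fin_cases this <;> decide
  exact Int.ModEq.sum fun k _ ↦ ((Int.ModEq.refl _).mul (hchoose a k)).mul (hchoose b k)

theorem not_eight_dvd_binomPairSum_even {a b : ℕ} (hab : b % 4 = (a + 2) % 4) :
    ¬ 8 ∣ binomPairSum ![15, -15, 10, -6] a b := by
  have key : ∀ a < 16, ∀ b < 16, b % 4 = (a + 2) % 4 →
      ¬ 8 ∣ binomPairSum ![15, -15, 10, -6] a b := by decide
  rw [(binomPairSum_modEq_mod_sixteen _ a b).dvd_iff]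
  exact key _ (a.mod_lt (by norm_num)) _ (b.mod_lt (by norm_num)) (by omega)

theorem add_mod_eight_of_eight_dvd_binomPairSum_odd {a b : ℕ} (hab : b % 4 = (a + 2) % 4)
    (h : 8 ∣ binomPairSum ![105, -35, 14, -6] a b) : (a + b) % 8 = 4 := by
  have key : ∀ a < 16, ∀ b < 16, b % 4 = (a + 2) % 4 →
      8 ∣ binomPairSum ![105, -35, 14, -6] a b → (a + b) % 8 = 4 := by decide
  rw [(binomPairSum_modEq_mod_sixteen _ a b).dvd_iff] at h
  have := key _ (a.mod_lt (by norm_num)) _ (b.mod_lt (by norm_num)) (by omega) h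
  omega

/-- If `m ≡ 2 (mod 4)`, `m ≤ l` and `H_l^m(−2) ≡ 0 (mod 8)`, then `l ≡ 5 (mod 8)`. -/
theorem l_mod_eight_of_HLM_cong_zero' (l m : ℕ) (hml : m ≤ l) (hm : m % 4 = 2)
    (h : Cong2 (HLM l m) 0 3) : l % 8 = 5 := by
  have hhead := padicNorm_two_sum_range_four_sigmaLM_le h
  have hab : (l + m) / 2 % 4 = ((l - m) / 2 + 2) % 4 := by omega
  by_cases hl : (l + m) % 2 = 0
  · have h8 := pow_dvd_of_padicNorm_le_of_intCast_mul_eq (p := 2) (e := 3) hhead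
      (sum_range_four_sigmaLM_of_even hl)
    exact absurd h8 (not_eight_dvd_binomPairSum_even hab)
  · have h8 := pow_dvd_of_padicNorm_le_of_intCast_mul_eq (p := 2) (e := 3) hhead
      (sum_range_four_sigmaLM_of_odd hl)
    have := add_mod_eight_of_eight_dvd_binomPairSum_odd hab h8
    omega
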